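/- arXiv:1807.00594 — 3 statements merged into one kernel-verified Lean document; each statement's English description precedes it below -/
import Mathlib

section
/- For any digraph D = (V, A), any T ⊆ V, and any E ⊆ V, the set system Γ(D, T, E) = (E, I) with I = { X ⊆ E : there is a routing from X to T in D } satisfies the independence axioms of a matroid (the empty set is independent, independence is downward closed, and the augmentation property holds). -/
open Set

/-- `p` is a path in the digraph on vertex type `α` with arc relation `A`:
a nonempty, non-repeating list of vertices with consecutive vertices joined by arcs. -/
def IsDiPath {α : Type*} (A : α → α → Prop) (p : List α) : Prop :=
  p ≠ [] ∧ p.Nodup ∧ p.Chain' A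

/-- `R` is a routing from `X` to `Y` in the digraph with arc relation `A`:
a family of pairwise vertex-disjoint paths such that every `x ∈ X` is the first
vertex of some path of `R`, and every path of `R` ends in `Y`. -/
def IsRouting {α : Type*} (A : α → α → Prop) (R : Set (List α)) (X Y : Set α) : Prop :=
  (∀ p ∈ R, IsDiPath A p) ∧
  (∀ x ∈ X, ∃ p ∈ R, p.head? = some x) ∧
  (∀ p ∈ R, ∃ y ∈ Y, p.getLast? = some y) ∧
  (∀ p ∈ R, ∀ q ∈ R, p ≠ q → ∀ v, v ∈ p → v ∉ q)

/-!
Suppose `X` and `Y` can be routed to `T`, `|X| < |Y|`, and no `X ∪ {y}` with `y ∈ Y \ X` can.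
By Menger's theorem (proved by Göring's induction on the number of arcs) each `X ∪ {y}` is
separated from `T` by a set `S y` of at most `|X|` vertices. A routing of `X` has `|X|` disjoint
paths, so each path meets each `S y` exactly once; the vertices where the paths leave
`⋃ y, S y` for the last time then separate all of `X ∪ Y` from `T`. This separator has `|X|`
vertices, yet the routing of `Y` consists of `|Y| > |X|` disjoint paths that must all cross it.
-/

section

variable {α : Type*}

namespace List

theorem exists_eq_append_cons_first {P : α → Prop} {l : List α} (h : ∃ a ∈ l, P a) :
    ∃ l₁ a l₂, l = l₁ ++ a :: l₂ ∧ P a ∧ ∀ b ∈ l₁, ¬ P b := by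
  classical
  obtain ⟨a, ha⟩ := Option.isSome_iff_exists.1
    (find?_isSome.2 (by simpa using h) : (l.find? fun a => decide (P a)).isSome)
  obtain ⟨hPa, l₁, l₂, rfl, hl₁⟩ := find?_eq_some_iff_append.1 ha
  exact ⟨l₁, a, l₂, rfl, by simpa using hPa, fun b hb => by simpa using hl₁ b hb⟩

theorem exists_eq_append_cons_last {P : α → Prop} {l : List α} (h : ∃ a ∈ l, P a) :
    ∃ l₁ a l₂, l = l₁ ++ a :: l₂ ∧ P a ∧ ∀ b ∈ l₂, ¬ P b := by
  obtain ⟨l₁, a, l₂, hl, hPa, hl₁⟩ :=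
    exists_eq_append_cons_first (l := l.reverse) (by simpa using h)
  refine ⟨l₂.reverse, a, l₁.reverse, ?_, hPa, by simpa using hl₁⟩
  rw [← reverse_reverse l, hl]
  simp

theorem getLast?_eq_some_of_notMem_dropLast {l : List α} {a : α} (ha : a ∈ l)
    (h : a ∉ l.dropLast) : l.getLast? = some a := by
  rcases eq_nil_or_concat l with rfl | ⟨L, b, rfl⟩
  · simp at ha
  · simp_all

theorem mem_tail_append_cons {l₁ l₂ : List α} {x a : α} (ha : a ∈ l₂) :
    a ∈ (l₁ ++ x :: l₂).tail := by
  cases l₁ <;> simp [ha]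

theorem getLast?_filter_append_cons {p : α → Bool} {l₁ l₂ : List α} {a : α} (ha : p a)
    (h : ∀ b ∈ l₂, p b = false) : ((l₁ ++ a :: l₂).filter p).getLast? = some a := by
  have h₂ : l₂.filter p = [] := filter_eq_nil_iff.2 fun b hb => by simp [h b hb]
  simp [filter_append, ha, h₂]

theorem isChain_append_cons_of_isChain {R : α → α → Prop} {l₁ l₂ m₁ m₂ : List α}
    {x : α} (h : (l₁ ++ x :: l₂).IsChain R) (h' : (m₁ ++ x :: m₂).IsChain R) :
    (l₁ ++ x :: m₂).IsChain R :=
  isChain_split.2 ⟨(isChain_split.1 h).1, (isChain_split.1 h').2⟩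

theorem IsChain.imp_of_mem_dropLast {R R' : α → α → Prop} {l : List α}
    (H : ∀ a ∈ l.dropLast, ∀ b, R a b → R' a b) (h : l.IsChain R) : l.IsChain R' := by
  induction h with
  | nil => exact .nil
  | singleton a => exact .singleton a
  | cons_cons hab _ ih =>
    exact .cons_cons (H _ (by simp) _ hab) (ih fun a ha => H a (by simp_all))

theorem IsChain.imp_or_mem {R R' : α → α → Prop} {u v : α} {l : List α}
    (H : ∀ a b, R a b → R' a b ∨ a = u ∧ b = v) (h : l.IsChain R) :
    l.IsChain R' ∨ u ∈ l ∧ v ∈ l := by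
  induction h with
  | nil => exact .inl .nil
  | singleton a => exact .inl (.singleton a)
  | cons_cons hab _ ih =>
    rcases H _ _ hab with hab' | ⟨rfl, rfl⟩
    · exact ih.imp (.cons_cons hab') fun h => ⟨mem_cons_of_mem _ h.1, mem_cons_of_mem _ h.2⟩
    · exact .inr (by simp)

end List

def IsWalk (A : α → α → Prop) (Z T : Set α) (w : List α) : Prop :=
  w.IsChain A ∧ (∃ z ∈ Z, w.head? = some z) ∧ ∃ t ∈ T, w.getLast? = some t

def IsSeparator (A : α → α → Prop) (Z T S : Set α) : Prop :=
  ∀ w, IsWalk A Z T w → ∃ v ∈ w, v ∈ S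

/-- Unlike a routing, a linkage is a finite family and need not start at every vertex of `Z`. -/
structure IsLinkage (A : α → α → Prop) (P : Finset (List α)) (Z T : Set α) : Prop where
  isWalk : ∀ p ∈ P, IsWalk A Z T p
  nodup : ∀ p ∈ P, p.Nodup
  pairwiseDisjoint : (P : Set (List α)).Pairwise List.Disjoint

/-- Together with `IsLinkage.card_le_card_of_isSeparator`, this is the min-max equality of
Menger's theorem for `Z` and `T`. -/
def MengerHolds (A : α → α → Prop) (Z T : Set α) : Prop :=
  ∃ (S : Finset α) (P : Finset (List α)),
    IsSeparator A Z T ↑S ∧ IsLinkage A P Z T ∧ S.card ≤ P.card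

variable {A A' : α → α → Prop} {Z Z' T T' : Set α}

namespace IsWalk

variable {w : List α}

theorem ne_nil (h : IsWalk A Z T w) : w ≠ [] := by
  rintro rfl
  simp [IsWalk] at h

theorem mono (h : IsWalk A Z T w) (hA : A ≤ A') : IsWalk A' Z T w :=
  ⟨h.1.imp hA, h.2⟩

theorem mono_source (h : IsWalk A Z T w) (hZ : Z ⊆ Z') : IsWalk A Z' T w :=
  ⟨h.1, by obtain ⟨z, hz, hw⟩ := h.2.1; exact ⟨z, hZ hz, hw⟩, h.2.2⟩

theorem reverse (h : IsWalk A Z T w) : IsWalk (flip A) T Z w.reverse :=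
  ⟨List.isChain_reverse.2 h.1, by simpa using h.2.2, by simpa using h.2.1⟩

theorem append_cons {l₁ l₂ m₁ m₂ : List α} {x : α} (h : IsWalk A Z T' (l₁ ++ x :: l₂))
    (h' : IsWalk A Z' T (m₁ ++ x :: m₂)) : IsWalk A Z T (l₁ ++ x :: m₂) := by
  refine ⟨List.isChain_append_cons_of_isChain h.1 h'.1, ?_, ?_⟩
  · simpa using h.2.1
  · simpa [List.getLast?_append_cons] using h'.2.2

theorem dropLast_append {S : Set α} {p q : List α} (hp : IsWalk A Z S p) (hq : IsWalk A S T q)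
    (hpq : q.head? = p.getLast?) : IsWalk A Z T (p.dropLast ++ q) := by
  obtain ⟨s, -, hs⟩ := hp.2.2
  obtain ⟨l, rfl⟩ := List.getLast?_eq_some_iff.1 hs
  obtain ⟨r, rfl⟩ := List.head?_eq_some_iff.1 (hpq.trans hs)
  simpa using append_cons (l₂ := []) (m₁ := []) hp hq

end IsWalk

namespace IsSeparator

variable {S : Set α}

theorem of_source_subset (h : Z ⊆ S) : IsSeparator A Z T S := by
  rintro w ⟨-, ⟨z, hz, hw⟩, -⟩
  exact ⟨z, List.mem_of_head? hw, h hz⟩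

theorem of_target_subset (h : T ⊆ S) : IsSeparator A Z T S := by
  rintro w ⟨-, -, ⟨t, ht, hw⟩⟩
  exact ⟨t, List.mem_of_getLast? hw, h ht⟩

theorem mono_source (h : IsSeparator A Z T S) (hZ : Z' ⊆ Z) : IsSeparator A Z' T S :=
  fun w hw => h w (hw.mono_source hZ)

theorem reverse (h : IsSeparator A Z T S) : IsSeparator (flip A) T Z S := fun w hw => by
  simpa using h w.reverse hw.reverse

end IsSeparator

theorem injOn_of_pairwise_disjoint {ι : Type*} {s : Set ι} {f : ι → List α}
    (h : s.Pairwise fun i j => (f i).Disjoint (f j)) (hf : ∀ i ∈ s, f i ≠ []) :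
    s.InjOn f := by
  intro i hi j hj hij
  by_contra hne
  obtain ⟨v, hv⟩ := List.exists_mem_of_ne_nil _ (hf i hi)
  exact h hi hj hne hv (hij ▸ hv)

theorem isLinkage_image [DecidableEq (List α)] {ι : Type*} {s : Finset ι} {f : ι → List α}
    (hwalk : ∀ i ∈ s, IsWalk A Z T (f i)) (hnodup : ∀ i ∈ s, (f i).Nodup)
    (hdisj : (s : Set ι).Pairwise fun i j => (f i).Disjoint (f j)) :
    IsLinkage A (s.image f) Z T ∧ (s.image f).card = s.card := by
  refine ⟨⟨by simpa using hwalk, by simpa using hnodup, ?_⟩, Finset.card_image_of_injOn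
    (injOn_of_pairwise_disjoint hdisj fun i hi => (hwalk i hi).ne_nil)⟩
  rw [Finset.coe_image]
  exact hdisj.image

namespace IsLinkage

variable {P : Finset (List α)}

theorem mono (h : IsLinkage A P Z T) (hA : A ≤ A') : IsLinkage A' P Z T :=
  ⟨fun p hp => (h.isWalk p hp).mono hA, h.nodup, h.pairwiseDisjoint⟩

theorem reverse (h : IsLinkage A P Z T) :
    IsLinkage (flip A) (P.map ⟨List.reverse, List.reverse_injective⟩) T Z where
  isWalk := by simpa using fun p hp => (h.isWalk p hp).reverse
  nodup := by simpa using h.nodup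
  pairwiseDisjoint := by
    rw [Finset.coe_map, Function.Embedding.coeFn_mk, List.reverse_injective.injOn.pairwise_image]
    exact h.pairwiseDisjoint.mono' fun p q hpq v hvp hvq =>
      hpq (by simpa using hvp) (by simpa using hvq)

theorem sum_card_filter_mem [DecidableEq α] (h : IsLinkage A P Z T) (S : Finset α) :
    ∑ p ∈ P, (S.filter (· ∈ p)).card = (S.filter fun v => ∃ p ∈ P, v ∈ p).card := by
  rw [← Finset.card_biUnion]
  · congr 1
    ext v
    simp only [Finset.mem_biUnion, Finset.mem_filter]
    tauto
  · intro p hp q hq hpq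
    simp only [Function.onFun, Finset.disjoint_left, Finset.mem_filter]
    exact fun v hv hv' => h.pairwiseDisjoint hp hq hpq hv.2 hv'.2

variable {S : Finset α}

theorem one_le_card_filter [DecidableEq α] (h : IsLinkage A P Z T) (hS : IsSeparator A Z T S)
    {p : List α} (hp : p ∈ P) : 1 ≤ (S.filter (· ∈ p)).card := by
  obtain ⟨v, hv, hvS⟩ := hS p (h.isWalk p hp)
  exact Finset.card_pos.2 ⟨v, Finset.mem_filter.2 ⟨hvS, hv⟩⟩

theorem card_le_card_of_isSeparator (h : IsLinkage A P Z T) (hS : IsSeparator A Z T S) :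
    P.card ≤ S.card := by
  classical
  calc P.card = ∑ _p ∈ P, 1 := by simp
    _ ≤ ∑ p ∈ P, (S.filter (· ∈ p)).card :=
      Finset.sum_le_sum fun p hp => h.one_le_card_filter hS hp
    _ = (S.filter fun v => ∃ p ∈ P, v ∈ p).card := h.sum_card_filter_mem S
    _ ≤ S.card := Finset.card_filter_le _ _

theorem exists_mem_of_card_le (h : IsLinkage A P Z T) (hS : IsSeparator A Z T S)
    (hcard : S.card ≤ P.card) {s : α} (hs : s ∈ S) : ∃ p ∈ P, s ∈ p := by
  classical
  by_contra! hno
  have hlt : (S.filter fun v => ∃ p ∈ P, v ∈ p).card < S.card :=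
    Finset.card_lt_card (Finset.filter_ssubset.2 ⟨s, hs, by simpa using hno⟩)
  have := (Finset.sum_le_sum fun p hp => h.one_le_card_filter hS hp).trans_eq
    (h.sum_card_filter_mem S)
  simp at this
  omega

theorem eq_of_mem_of_card_le (h : IsLinkage A P Z T) (hS : IsSeparator A Z T S)
    (hcard : S.card ≤ P.card) {p : List α} (hp : p ∈ P) {a b : α} (ha : a ∈ p)
    (haS : a ∈ S) (hb : b ∈ p) (hbS : b ∈ S) : a = b := by
  classical
  by_contra hab
  have hlt : ∑ _q ∈ P, 1 < ∑ q ∈ P, (S.filter (· ∈ q)).card :=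
    Finset.sum_lt_sum (fun q hq => h.one_le_card_filter hS hq)
      ⟨p, hp, Finset.one_lt_card.2 ⟨a, by simp [ha, haS], b, by simp [hb, hbS], hab⟩⟩
  rw [h.sum_card_filter_mem S] at hlt
  have := Finset.card_filter_le S fun v => ∃ p ∈ P, v ∈ p
  simp at hlt
  omega

end IsLinkage

/-! ### Menger's theorem -/

namespace IsLinkage

variable {P : Finset (List α)} {S : Set α}

theorem exists_trim_target (h : IsLinkage A P Z S) :
    ∃ P' : Finset (List α), IsLinkage A P' Z S ∧ P'.card = P.card ∧
      ∀ p ∈ P', ∀ a ∈ p.dropLast, a ∉ S := by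
  classical
  have hcut :
      ∀ p, ∃ q, p ∈ P → q <+: p ∧ IsWalk A Z S q ∧ ∀ a ∈ q.dropLast, a ∉ S := by
    intro p
    by_cases hp : p ∈ P
    · obtain ⟨hchain, hhead, t, ht, hlast⟩ := h.isWalk p hp
      obtain ⟨l₁, s, l₂, rfl, hs, hl₁⟩ :=
        List.exists_eq_append_cons_first ⟨t, List.mem_of_getLast? hlast, ht⟩
      refine ⟨l₁ ++ [s], fun _ => ⟨⟨l₂, by simp⟩, ⟨hchain.prefix ⟨l₂, by simp⟩, ?_, s, hs,
        List.getLast?_concat⟩, by simpa using hl₁⟩⟩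
      simpa using hhead
    · exact ⟨[], fun h => absurd h hp⟩
  choose trim htrim using hcut
  obtain ⟨hP', hcard⟩ := isLinkage_image (s := P) (f := trim) (fun p hp => (htrim p hp).2.1)
    (fun p hp => (h.nodup p hp).sublist (htrim p hp).1.sublist)
    fun p hp q hq hpq v hvp hvq => h.pairwiseDisjoint hp hq hpq
      ((htrim p hp).1.subset hvp) ((htrim q hq).1.subset hvq)
  exact ⟨_, hP', hcard, by simpa using fun p hp => (htrim p hp).2.2⟩

theorem exists_trim_source (h : IsLinkage A P S T) :
    ∃ P' : Finset (List α), IsLinkage A P' S T ∧ P'.card = P.card ∧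
      ∀ p ∈ P', ∀ a ∈ p.tail, a ∉ S := by
  obtain ⟨P', hP', hcard, hdrop⟩ := h.reverse.exists_trim_target
  exact ⟨_, hP'.reverse, by simpa using hcard, by simpa using hdrop⟩

end IsLinkage

theorem MengerHolds.reverse (h : MengerHolds A Z T) : MengerHolds (flip A) T Z := by
  obtain ⟨S, P, hS, hP, hcard⟩ := h
  exact ⟨S, _, hS.reverse, hP.reverse, by simpa using hcard⟩

theorem IsSeparator.of_deleteArc {C B : Set α} {u v : α} (hC : IsSeparator A' Z T C)
    (hA : ∀ x y, A x y → A' x y ∨ x = u ∧ y = v) (hCB : C ⊆ B)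
    (huv : u ∈ B ∨ v ∈ B) :
    IsSeparator A Z T B := by
  intro w hw
  rcases hw.1.imp_or_mem hA with hw' | ⟨hu, hv⟩
  · obtain ⟨c, hc, hcC⟩ := hC w ⟨hw', hw.2⟩
    exact ⟨c, hc, hCB hcC⟩
  · rcases huv with h | h
    exacts [⟨u, hu, h⟩, ⟨v, hv, h⟩]

theorem IsSeparator.of_isSeparator_target {S S' : Set α} (hS : IsSeparator A Z T S)
    (hA : ∀ x y, A x y → A' x y ∨ x ∈ S) (hS' : IsSeparator A' Z S S') :
    IsSeparator A Z T S' := by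
  intro w hw
  obtain ⟨s, hs, hsS⟩ := hS w hw
  obtain ⟨l₁, s, l₂, rfl, hsS, hl₁⟩ := List.exists_eq_append_cons_first ⟨s, hs, hsS⟩
  have hpre : l₁ ++ [s] <+: l₁ ++ s :: l₂ := ⟨l₂, by simp⟩
  have hchain : (l₁ ++ [s]).IsChain A' := by
    refine (hw.1.prefix hpre).imp_of_mem_dropLast fun a ha b hab => ?_
    exact (hA a b hab).resolve_right (hl₁ a (by simpa using ha))
  obtain ⟨v, hv, hvS'⟩ :=
    hS' _ ⟨hchain, by simpa using hw.2.1, s, hsS, List.getLast?_concat⟩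
  exact ⟨v, hpre.subset hv, hvS'⟩

theorem exists_isLinkage_onto_target {S : Finset α} (hS : IsSeparator A Z T ↑S)
    (hA : ∀ x y, A x y → A' x y ∨ x ∈ S)
    (hmin : ∀ S' : Finset α, IsSeparator A Z T ↑S' → S.card ≤ S'.card)
    (hmenger : MengerHolds A' Z ↑S) :
    ∃ P : Finset (List α), IsLinkage A' P Z ↑S ∧ S.card ≤ P.card ∧
      (∀ p ∈ P, ∀ a ∈ p.dropLast, a ∉ S) ∧
      ∀ s ∈ S, ∃ p ∈ P, p.getLast? = some s := by
  obtain ⟨S₁, P₁, hS₁, hP₁, hcard₁⟩ := hmenger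
  obtain ⟨P, hP, hcard, hdrop⟩ := hP₁.exists_trim_target
  have hSP : S.card ≤ P.card :=
    hcard ▸ (hmin S₁ (hS.of_isSeparator_target hA hS₁)).trans hcard₁
  refine ⟨P, hP, hSP, hdrop, fun s hs => ?_⟩
  obtain ⟨p, hp, hsp⟩ :=
    hP.exists_mem_of_card_le (IsSeparator.of_target_subset subset_rfl) hSP hs
  exact ⟨p, hp, List.getLast?_eq_some_of_notMem_dropLast hsp fun h => hdrop p hp s h hs⟩

theorem exists_isLinkage_onto_source {S : Finset α} (hS : IsSeparator A Z T ↑S)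
    (hA : ∀ x y, A x y → A' x y ∨ y ∈ S)
    (hmin : ∀ S' : Finset α, IsSeparator A Z T ↑S' → S.card ≤ S'.card)
    (hmenger : MengerHolds A' ↑S T) :
    ∃ P : Finset (List α), IsLinkage A' P ↑S T ∧ S.card ≤ P.card ∧
      (∀ p ∈ P, ∀ a ∈ p.tail, a ∉ S) ∧ ∀ s ∈ S, ∃ p ∈ P, p.head? = some s := by
  obtain ⟨P, hP, hSP, hdrop, honto⟩ := exists_isLinkage_onto_target (A := flip A)
    (A' := flip A') hS.reverse (fun x y h => hA y x h) (fun S' h => hmin S' h.reverse)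
    hmenger.reverse
  refine ⟨_, hP.reverse, by simpa using hSP, by simpa using hdrop, fun s hs => ?_⟩
  obtain ⟨p, hp, hps⟩ := honto s hs
  exact ⟨p.reverse, by simpa using hp, by simpa using hps⟩

/-- Otherwise following `p` up to `x` and `q` from there would give a walk avoiding `C`. -/
theorem IsSeparator.mem_of_mem_of_mem {C S₁ S₂ : Set α} (hC : IsSeparator A Z T C)
    (hC₁ : C ⊆ S₁) (hC₂ : C ⊆ S₂) {p q : List α} (hp : IsWalk A Z S₁ p)
    (hp' : ∀ a ∈ p.dropLast, a ∉ S₁) (hq : IsWalk A S₂ T q)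
    (hq' : ∀ a ∈ q.tail, a ∉ S₂)
    {x : α} (hxp : x ∈ p) (hxq : x ∈ q) : x ∈ C := by
  obtain ⟨p₁, p₂, rfl⟩ := List.append_of_mem hxp
  obtain ⟨q₁, q₂, rfl⟩ := List.append_of_mem hxq
  obtain ⟨c, hc, hcC⟩ := hC _ (hp.append_cons hq)
  rcases List.mem_append.1 hc with hc | hc
  · exact absurd (hC₁ hcC) (hp' c (by simp [hc]))
  · rcases List.mem_cons.1 hc with rfl | hc
    · exact hcC
    · exact absurd (hC₂ hcC) (hq' c (List.mem_tail_append_cons hc))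

theorem isWalk_ite_cons [DecidableEq α] {C : Set α} {u v : α} {q : List α} (huv : A u v)
    (hq : IsWalk A (insert v C) T q) (htail : ∀ a ∈ q.tail, a ∉ insert v C) (hu : u ∉ q)
    (hvC : v ∉ C) :
    IsWalk A (insert u C) T (if q.head? = some v then u :: q else q) ∧
      ∀ a ∈ (if q.head? = some v then u :: q else q).tail, a ∉ insert u C := by
  obtain ⟨hch, ⟨s, hs, hhead⟩, hlast⟩ := hq
  obtain ⟨r, rfl⟩ := List.head?_eq_some_iff.1 hhead
  have hrC : ∀ a ∈ r, a ∉ C := fun a ha haC => htail a ha (mem_insert_of_mem _ haC)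
  by_cases hsv : s = v
  · subst hsv
    simp only [hhead, if_true, List.tail_cons]
    refine ⟨⟨hch.cons_cons huv, ⟨u, mem_insert _ _, rfl⟩, by simpa using hlast⟩, ?_⟩
    rintro a ha (rfl | haC)
    · exact hu ha
    · rcases List.mem_cons.1 ha with rfl | ha
      exacts [hvC haC, hrC a ha haC]
  · simp only [hhead, Option.some.injEq, hsv, if_false, List.tail_cons]
    refine ⟨⟨hch, ⟨s, mem_insert_of_mem _ (hs.resolve_left hsv), hhead⟩, hlast⟩, ?_⟩
    rintro a ha (rfl | haC)
    exacts [hu (List.mem_cons_of_mem _ ha), hrC a ha haC]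

theorem IsLinkage.exists_cons_arc {P : Finset (List α)} {C : Set α} {u v : α} (huv : A u v)
    (hP : IsLinkage A P (insert v C) T) (htail : ∀ q ∈ P, ∀ a ∈ q.tail, a ∉ insert v C)
    (honto : ∀ s ∈ insert v C, ∃ q ∈ P, q.head? = some s) (hu : ∀ q ∈ P, u ∉ q)
    (hvC : v ∉ C) :
    ∃ P' : Finset (List α), IsLinkage A P' (insert u C) T ∧
      (∀ q ∈ P', ∀ a ∈ q.tail, a ∉ insert u C) ∧
      (∀ s ∈ insert u C, ∃ q ∈ P', q.head? = some s) ∧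
      ∀ q ∈ P', ∀ x ∈ q, x = u ∨ ∃ q₀ ∈ P, x ∈ q₀ := by
  classical
  set f : List α → List α := fun q => if q.head? = some v then u :: q else q with hf
  have hmem : ∀ q x, x ∈ f q ↔ q.head? = some v ∧ x = u ∨ x ∈ q := by
    intro q x
    by_cases hq : q.head? = some v <;> simp [hf, hq]
  have hcons : ∀ q, q.head? = some v → f q = u :: q := fun q h => by simp [hf, h]
  have hsame : ∀ q, q.head? ≠ some v → f q = q := fun q h => by simp [hf, h]
  have hfP : ∀ q ∈ P, IsWalk A (insert u C) T (f q) ∧ ∀ a ∈ (f q).tail, a ∉ insert u C :=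
    fun q hq => isWalk_ite_cons huv (hP.isWalk q hq) (htail q hq) (hu q hq) hvC
  obtain ⟨hP', -⟩ := isLinkage_image (s := P) (f := f) (fun q hq => (hfP q hq).1)
    (fun q hq => by
      by_cases hqv : q.head? = some v
      · rw [hcons q hqv]
        exact List.nodup_cons.2 ⟨hu q hq, hP.nodup q hq⟩
      · rw [hsame q hqv]
        exact hP.nodup q hq)
    (fun p hp q hq hpq x hxp hxq => by
      rw [hmem] at hxp hxq
      rcases hxp with ⟨hpv, rfl⟩ | hxp <;> rcases hxq with ⟨hqv, hxq⟩ | hxq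
      · exact hP.pairwiseDisjoint hp hq hpq (List.mem_of_head? hpv) (List.mem_of_head? hqv)
      · exact hu q hq hxq
      · exact hu p hp (hxq ▸ hxp)
      · exact hP.pairwiseDisjoint hp hq hpq hxp hxq)
  refine ⟨_, hP', by simpa using fun q hq => (hfP q hq).2, ?_, ?_⟩
  · rintro s (rfl | hsC)
    · obtain ⟨q, hq, hqv⟩ := honto v (mem_insert _ _)
      exact ⟨f q, Finset.mem_image_of_mem f hq, by simp [hcons q hqv]⟩
    · obtain ⟨q, hq, hqs⟩ := honto s (mem_insert_of_mem _ hsC)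
      refine ⟨f q, Finset.mem_image_of_mem f hq, ?_⟩
      rwa [hsame q (by rw [hqs]; rintro ⟨⟩; exact hvC hsC)]
  · simp only [Finset.mem_image, forall_exists_index, and_imp, forall_apply_eq_imp_iff₂]
    intro q hq x hx
    rcases (hmem q x).1 hx with ⟨-, rfl⟩ | hx
    exacts [.inl rfl, .inr ⟨q, hq, hx⟩]

theorem IsLinkage.exists_concat {P₁ P₂ : Finset (List α)} {S : Set α}
    (h₁ : IsLinkage A P₁ Z S) (h₁' : ∀ p ∈ P₁, ∀ a ∈ p.dropLast, a ∉ S)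
    (h₂ : IsLinkage A P₂ S T)
    (honto : ∀ s ∈ S, ∃ q ∈ P₂, q.head? = some s)
    (hcross : ∀ p ∈ P₁, ∀ q ∈ P₂, ∀ x ∈ p, x ∈ q → x ∈ S) :
    ∃ P : Finset (List α), IsLinkage A P Z T ∧ P.card = P₁.card := by
  classical
  have hmate : ∀ p, ∃ q, p ∈ P₁ → q ∈ P₂ ∧ q.head? = p.getLast? := by
    intro p
    by_cases hp : p ∈ P₁
    · obtain ⟨s, hs, hlast⟩ := (h₁.isWalk p hp).2.2
      obtain ⟨q, hq, hqs⟩ := honto s hs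
      exact ⟨q, fun _ => ⟨hq, hqs.trans hlast.symm⟩⟩
    · exact ⟨[], fun h => absurd h hp⟩
  choose mate hmate using hmate
  have hdisj : ∀ p ∈ P₁, ∀ q ∈ P₂, ∀ x ∈ p.dropLast, x ∉ q := fun p hp q hq x hx hxq =>
    h₁' p hp x hx (hcross p hp q hq x (List.dropLast_subset _ hx) hxq)
  have hmate_ne : ∀ p ∈ P₁, ∀ p' ∈ P₁, p ≠ p' → mate p ≠ mate p' := by
    intro p hp p' hp' hne heq
    obtain ⟨s, -, hs⟩ := (h₁.isWalk p hp).2.2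
    have hs' : p'.getLast? = some s := by rw [← (hmate p' hp').2, ← heq, (hmate p hp).2, hs]
    exact h₁.pairwiseDisjoint hp hp' hne (List.mem_of_getLast? hs) (List.mem_of_getLast? hs')
  obtain ⟨hP, hcard⟩ := isLinkage_image (s := P₁) (f := fun p => p.dropLast ++ mate p)
    (A := A) (Z := Z) (T := T)
    (fun p hp => (h₁.isWalk p hp).dropLast_append (h₂.isWalk _ (hmate p hp).1) (hmate p hp).2)
    (fun p hp => List.nodup_append.2 ⟨(h₁.nodup p hp).sublist (List.dropLast_sublist _),
      h₂.nodup _ (hmate p hp).1,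
      fun a ha b hb hab => hdisj p hp _ (hmate p hp).1 a ha (hab ▸ hb)⟩)
    (fun p hp p' hp' hne x hx hx' => by
      rcases List.mem_append.1 hx with hx | hx <;> rcases List.mem_append.1 hx' with hx' | hx'
      · exact h₁.pairwiseDisjoint hp hp' hne (List.dropLast_subset _ hx)
          (List.dropLast_subset _ hx')
      · exact hdisj p hp _ (hmate p' hp').1 x hx hx'
      · exact hdisj p' hp' _ (hmate p hp).1 x hx' hx
      · exact h₂.pairwiseDisjoint (hmate p hp).1 (hmate p' hp').1 (hmate_ne p hp p' hp' hne)
          hx hx')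
  exact ⟨_, hP, hcard⟩

/-- Göring's induction step: `C ∪ {u}` and `C ∪ {v}` are minimum separators for `A`, they are
linked from `Z` and to `T` in `A'`, and the two linkages can be joined through `C` and the arc
`uv`. -/
theorem mengerHolds_of_isSeparator_deleteArc {u v : α} (huv : A u v) (hle : A' ≤ A)
    (hdel : ∀ x y, A x y → A' x y ∨ x = u ∧ y = v) (hmenger : ∀ Z T, MengerHolds A' Z T)
    {C : Finset α} (hC : IsSeparator A' Z T ↑C)
    (hmin : ∀ S : Finset α, IsSeparator A Z T ↑S → C.card < S.card) : MengerHolds A Z T := by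
  classical
  have hSu : IsSeparator A Z T ↑(insert u C) := hC.of_deleteArc hdel (by simp) (by simp)
  have hSv : IsSeparator A Z T ↑(insert v C) := hC.of_deleteArc hdel (by simp) (by simp)
  have huC : u ∉ C := fun h => (hmin _ hSu).ne (by rw [Finset.insert_eq_of_mem h])
  have hvC : v ∉ C := fun h => (hmin _ hSv).ne (by rw [Finset.insert_eq_of_mem h])
  have hcard_u := Finset.card_insert_of_notMem huC
  have hcard_v := Finset.card_insert_of_notMem hvC
  obtain ⟨P₁, hP₁, hP₁card, hP₁end, hP₁onto⟩ := exists_isLinkage_onto_target hSu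
    (fun x y h => (hdel x y h).imp_right fun h => by simp [h.1])
    (fun S' hS' => by have := hmin S' hS'; omega) (hmenger _ _)
  obtain ⟨P₂, hP₂, -, hP₂start, hP₂onto⟩ := exists_isLinkage_onto_source hSv
    (fun x y h => (hdel x y h).imp_right fun h => by simp [h.2])
    (fun S' hS' => by have := hmin S' hS'; omega) (hmenger _ _)
  have hcross : ∀ p ∈ P₁, ∀ q ∈ P₂, ∀ x ∈ p, x ∈ q → x ∈ C := fun p hp q hq x hxp hxq =>
    hC.mem_of_mem_of_mem (by simp) (by simp) (hP₁.isWalk p hp) (hP₁end p hp)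
      (hP₂.isWalk q hq) (hP₂start q hq) hxp hxq
  have hu : ∀ q ∈ P₂, u ∉ q := fun q hq huq => by
    obtain ⟨p, hp, hpu⟩ := hP₁onto u (by simp)
    exact huC (hcross p hp q hq u (List.mem_of_getLast? hpu) huq)
  simp only [← Finset.mem_coe, Finset.coe_insert] at hP₁ hP₂ hP₂onto hP₂start hP₁end
  obtain ⟨P₂', hP₂', -, hP₂'onto, hP₂'mem⟩ :=
    (hP₂.mono hle).exists_cons_arc huv hP₂start hP₂onto hu (by simpa using hvC)
  obtain ⟨P, hP, hPcard⟩ := (hP₁.mono hle).exists_concat hP₁end hP₂' hP₂'onto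
    fun p hp q hq x hxp hxq => by
      rcases hP₂'mem q hq x hxq with rfl | ⟨q₀, hq₀, hxq₀⟩
      exacts [mem_insert _ _, mem_insert_of_mem _ (hcross p hp q₀ hq₀ x hxp hxq₀)]
  exact ⟨insert u C, P, hSu, hP, hPcard ▸ hP₁card⟩

theorem mengerHolds_of_deleteArc {u v : α} (huv : A u v) (hle : A' ≤ A)
    (hdel : ∀ x y, A x y → A' x y ∨ x = u ∧ y = v) (hmenger : ∀ Z T, MengerHolds A' Z T)
    (Z T : Set α) : MengerHolds A Z T := by
  obtain ⟨C, R, hC, hR, hCR⟩ := hmenger Z T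
  by_cases hsmall : ∃ S : Finset α, IsSeparator A Z T ↑S ∧ S.card ≤ R.card
  · obtain ⟨S, hS, hSR⟩ := hsmall
    exact ⟨S, R, hS, hR.mono hle, hSR⟩
  push Not at hsmall
  exact mengerHolds_of_isSeparator_deleteArc huv hle hdel hmenger hC fun S hS =>
    hCR.trans_lt (hsmall S hS)

theorem mengerHolds_of_forall_not [Finite α] (hA : ∀ x y, ¬ A x y) (Z T : Set α) :
    MengerHolds A Z T := by
  classical
  let S := (Z ∩ T).toFinite.toFinset
  have hsingleton : ∀ w, IsWalk A Z T w → ∃ s ∈ S, w = [s] := by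
    rintro (_ | ⟨a, _ | ⟨b, l⟩⟩) ⟨hch, ⟨z, hz, hhead⟩, t, ht, hlast⟩
    · simp at hhead
    · simp_all [S]
    · exact absurd (List.isChain_cons_cons.1 hch).1 (hA a b)
  refine ⟨S, S.map ⟨fun v => [v], List.singleton_injective⟩, fun w hw => ?_,
    ⟨?_, ?_, ?_⟩, ?_⟩
  · obtain ⟨s, hs, rfl⟩ := hsingleton w hw
    exact ⟨s, by simp, hs⟩
  · simp only [Finset.mem_map, Function.Embedding.coeFn_mk, forall_exists_index, and_imp,
      forall_apply_eq_imp_iff₂]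
    intro s hs
    have : s ∈ Z ∩ T := by simpa [S] using hs
    exact ⟨.singleton s, ⟨s, this.1, rfl⟩, s, this.2, rfl⟩
  · simp
  · simp only [Finset.coe_map, Function.Embedding.coeFn_mk]
    rintro _ ⟨a, -, rfl⟩ _ ⟨b, -, rfl⟩ hab
    simpa [ne_comm] using hab
  · simp

theorem mengerHolds [Finite α] (A : α → α → Prop) (Z T : Set α) : MengerHolds A Z T := by
  induction hn : {q : α × α | A q.1 q.2}.ncard using Nat.strong_induction_on
    generalizing A Z T with
  | _ n ih =>
  by_cases harc : ∃ u v, A u v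
  · obtain ⟨u, v, huv⟩ := harc
    refine mengerHolds_of_deleteArc (A' := fun x y => A x y ∧ ¬(x = u ∧ y = v)) huv
      (fun x y h => h.1) (fun x y h => or_iff_not_imp_right.2 fun h' => ⟨h, h'⟩)
      (fun Z T => ih _ ?_ _ Z T rfl) Z T
    rw [← hn]
    convert Set.ncard_sdiff_singleton_lt_of_mem (s := {q : α × α | A q.1 q.2}) (a := (u, v)) huv
      using 2
    ext ⟨x, y⟩
    simp
  · push Not at harc
    exact mengerHolds_of_forall_not harc Z T

/-! ### Routings and augmentation -/

theorem IsRouting.exists_isLinkage [Finite α] {R : Set (List α)} {X : Set α}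
    (h : IsRouting A R X T) : ∃ P : Finset (List α), IsLinkage A P X T ∧ P.card = X.ncard := by
  classical
  have hpath : ∀ x, ∃ p, x ∈ X → p ∈ R ∧ p.head? = some x := fun x => by
    by_cases hx : x ∈ X
    · obtain ⟨p, hp, hpx⟩ := h.2.1 x hx
      exact ⟨p, fun _ => ⟨hp, hpx⟩⟩
    · exact ⟨[], fun h => absurd h hx⟩
  choose path hpath using hpath
  have hpath' : ∀ x ∈ X.toFinite.toFinset, path x ∈ R ∧ (path x).head? = some x :=
    fun x hx => hpath x (by simpa using hx)
  obtain ⟨hP, hcard⟩ := isLinkage_image (A := A) (Z := X) (T := T)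
    (fun x hx => ⟨(h.1 _ (hpath' x hx).1).2.2, ⟨x, by simpa using hx, (hpath' x hx).2⟩,
      h.2.2.1 _ (hpath' x hx).1⟩)
    (fun x hx => (h.1 _ (hpath' x hx).1).2.1)
    (fun x hx y hy hxy v hvx hvy => h.2.2.2 _ (hpath' x hx).1 _ (hpath' y hy).1
      (fun he => hxy <| by simpa [he, (hpath' y hy).2] using (hpath' x hx).2.symm) v hvx hvy)
  exact ⟨_, hP, by rw [hcard, Set.ncard_eq_toFinset_card X]⟩

theorem IsLinkage.isRouting [Finite α] {P : Finset (List α)} {X : Set α} (h : IsLinkage A P X T)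
    (hcard : X.ncard ≤ P.card) : IsRouting A ↑P X T := by
  have hS : IsSeparator A X T ↑X.toFinite.toFinset := IsSeparator.of_source_subset (by simp)
  have hcard' : X.toFinite.toFinset.card ≤ P.card := by rwa [← Set.ncard_eq_toFinset_card]
  refine ⟨fun p hp => ⟨(h.isWalk p hp).ne_nil, h.nodup p hp, (h.isWalk p hp).1⟩,
    fun x hx => ?_, fun p hp => (h.isWalk p hp).2.2,
    fun p hp q hq hpq v hv hv' => h.pairwiseDisjoint hp hq hpq hv hv'⟩
  obtain ⟨p, hp, hxp⟩ := h.exists_mem_of_card_le hS hcard' (by simpa using hx)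
  obtain ⟨z, hz, hhead⟩ := (h.isWalk p hp).2.1
  refine ⟨p, hp, ?_⟩
  rw [hhead, h.eq_of_mem_of_card_le hS hcard' hp hxp (by simpa using hx) (List.mem_of_head? hhead)
    (by simpa using hz)]

theorem exists_isSeparator_card_lt_of_not_isRouting [Finite α]
    (h : ¬ ∃ R, IsRouting A R Z T) :
    ∃ S : Finset α, IsSeparator A Z T ↑S ∧ S.card < Z.ncard := by
  obtain ⟨S, P, hS, hP, hSP⟩ := mengerHolds A Z T
  exact ⟨S, hS, hSP.trans_lt (not_le.1 fun hZP => h ⟨_, hP.isRouting hZP⟩)⟩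

/-- Otherwise the walk from the start of the path through `s` to `T` would miss `S`, as the
path meets `S` only once, after `s`. -/
theorem IsLinkage.exists_mem_of_mem_before {P : Finset (List α)} {X : Set α} {S : Finset α}
    (hP : IsLinkage A P X T) (hS : IsSeparator A X T ↑S) (hcard : S.card ≤ P.card)
    {a b w₁ w₂ : List α} {s : α} (hp : a ++ s :: b ∈ P) (hb : ∃ c ∈ b, c ∈ S)
    (hw : IsWalk A Z T (w₁ ++ s :: w₂)) : ∃ c ∈ w₂, c ∈ S := by
  obtain ⟨c, hcb, hcS⟩ := hb
  obtain ⟨d, hd, hdS⟩ := hS _ ((hP.isWalk _ hp).append_cons hw)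
  have hnd := List.nodup_append.1 (hP.nodup _ hp)
  have hdc : d ∈ a ++ [s] → d = c := fun hd' =>
    hP.eq_of_mem_of_card_le hS hcard hp (List.IsPrefix.subset ⟨b, by simp⟩ hd')
      hdS (by simp [hcb]) hcS
  rcases List.mem_append.1 hd with hda | hd
  · exact absurd rfl (hnd.2.2 d hda d (hdc (by simp [hda]) ▸ List.mem_cons_of_mem _ hcb))
  · rcases List.mem_cons.1 hd with rfl | hd
    · exact absurd (hdc (by simp) ▸ hcb) (List.nodup_cons.1 hnd.2.1).1
    · exact ⟨d, hd, hdS⟩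

theorem IsSeparator.iUnion {ι : Type*} [Nonempty ι] {X : Set α} {Z S : ι → Set α}
    (hS : ∀ i, IsSeparator A (X ∪ Z i) T (S i)) :
    IsSeparator A (X ∪ ⋃ i, Z i) T (⋃ i, S i) := by
  intro w ⟨hch, ⟨z, hz, hhead⟩, hlast⟩
  obtain ⟨i, hi⟩ : ∃ i, z ∈ X ∪ Z i := by
    simp only [mem_union, mem_iUnion] at hz ⊢
    rcases hz with hz | ⟨i, hz⟩
    exacts [⟨Classical.arbitrary ι, .inl hz⟩, ⟨i, .inr hz⟩]
  obtain ⟨v, hv, hvS⟩ := hS i w ⟨hch, ⟨z, hi, hhead⟩, hlast⟩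
  exact ⟨v, hv, mem_iUnion.2 ⟨i, hvS⟩⟩

/-- Each path of `P` meets each `S i` exactly once; by `exists_mem_of_mem_before`, the vertices
where the paths of `P` leave `⋃ i, S i` for the last time separate every `X ∪ Z i` from `T`. -/
theorem IsLinkage.exists_isSeparator_iUnion {ι : Type*} [Nonempty ι] {P : Finset (List α)}
    {X : Set α} {Z : ι → Set α} {S : ι → Finset α} (hP : IsLinkage A P X T)
    (hS : ∀ i, IsSeparator A (X ∪ Z i) T ↑(S i)) (hcard : ∀ i, (S i).card ≤ P.card) :
    ∃ S' : Finset α, S'.card ≤ P.card ∧ IsSeparator A (X ∪ ⋃ i, Z i) T ↑S' := by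
  classical
  set U : Set α := ⋃ i, ↑(S i)
  have hSX : ∀ i, IsSeparator A X T ↑(S i) := fun i => (hS i).mono_source subset_union_left
  let lastU : List α → Option α := fun p => (p.filter (· ∈ U)).getLast?
  refine ⟨P.biUnion fun p => (lastU p).toFinset, ?_, fun w hw => ?_⟩
  · calc _ ≤ ∑ p ∈ P, (lastU p).toFinset.card := Finset.card_biUnion_le
      _ ≤ ∑ _p ∈ P, 1 := Finset.sum_le_sum fun p _ => by cases lastU p <;> simp
      _ = P.card := by simp
  obtain ⟨w₁, s, w₂, rfl, hsU, hw₂⟩ :=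
    List.exists_eq_append_cons_last (IsSeparator.iUnion hS w hw)
  obtain ⟨i, hsi⟩ := mem_iUnion.1 hsU
  obtain ⟨p, hp, hsp⟩ := hP.exists_mem_of_card_le (hSX i) (hcard i) hsi
  obtain ⟨p₁, s', p₂, rfl, hs'U, hp₂⟩ := List.exists_eq_append_cons_last ⟨s, hsp, hsU⟩
  have hss' : s = s' := by
    by_contra hne
    have hsp₁ : s ∈ p₁ := by
      rcases List.mem_append.1 hsp with h | h
      · exact h
      · rcases List.mem_cons.1 h with h | h
        exacts [absurd h hne, absurd hsU (hp₂ s h)]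
    obtain ⟨a, b, rfl⟩ := List.append_of_mem hsp₁
    obtain ⟨j, hs'j⟩ := mem_iUnion.1 hs'U
    obtain ⟨c, hc, hcS⟩ := hP.exists_mem_of_mem_before (hSX j) (hcard j) (b := b ++ s' :: p₂)
      (by simpa using hp) ⟨s', by simp, hs'j⟩ hw
    exact hw₂ c hc (mem_iUnion.2 ⟨j, hcS⟩)
  subst hss'
  have hlast : lastU (p₁ ++ s :: p₂) = some s :=
    List.getLast?_filter_append_cons (decide_eq_true hsU) fun a ha => decide_eq_false (hp₂ a ha)
  exact ⟨s, by simp, Finset.mem_biUnion.2 ⟨_, hp, by simp [hlast]⟩⟩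

theorem IsRouting.exists_insert [Finite α] {R R' : Set (List α)} {X Y : Set α}
    (hX : IsRouting A R X T) (hY : IsRouting A R' Y T) (hXY : X.ncard < Y.ncard) :
    ∃ y ∈ Y \ X, ∃ R'' : Set (List α), IsRouting A R'' (insert y X) T := by
  by_contra! hno
  obtain ⟨P, hP, hPcard⟩ := hX.exists_isLinkage
  obtain ⟨Q, hQ, hQcard⟩ := hY.exists_isLinkage
  have hsep : ∀ y : ↥(Y \ X),
      ∃ S : Finset α, IsSeparator A (X ∪ {y.1}) T ↑S ∧ S.card ≤ P.card := by
    rintro ⟨y, hy⟩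
    obtain ⟨S, hS, hlt⟩ :=
      exists_isSeparator_card_lt_of_not_isRouting fun ⟨R'', h⟩ => hno y hy R'' h
    rw [Set.ncard_insert_of_notMem hy.2] at hlt
    exact ⟨S, by rwa [union_singleton], by omega⟩
  choose S hS hScard using hsep
  have : Nonempty ↥(Y \ X) :=
    (sdiff_nonempty.2 fun hYX => (Set.ncard_le_ncard hYX).not_gt hXY).to_subtype
  obtain ⟨S', hS'card, hS'⟩ := hP.exists_isSeparator_iUnion hS hScard
  have hYS' : IsSeparator A Y T ↑S' := hS'.mono_source fun y hy => by
    by_cases hyX : y ∈ X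
    · exact .inl hyX
    · exact .inr (mem_iUnion.2 ⟨⟨y, hy, hyX⟩, rfl⟩)
  have := hQ.card_le_card_of_isSeparator hYS'
  omega

end

/-- The set system `Γ(D,T,E)` satisfies the independence axioms of a matroid:
the empty set is independent, independence is downward closed, and augmentation holds. -/
theorem gammoid_indep_axioms {α : Type*} [Fintype α] (A : α → α → Prop) (T E : Set α) :
    ((∅ : Set α) ⊆ E ∧ ∃ R, IsRouting A R (∅ : Set α) T) ∧
    (∀ X Y : Set α, (Y ⊆ E ∧ ∃ R, IsRouting A R Y T) → X ⊆ Y →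
      (X ⊆ E ∧ ∃ R, IsRouting A R X T)) ∧
    (∀ X Y : Set α, (X ⊆ E ∧ ∃ R, IsRouting A R X T) → (Y ⊆ E ∧ ∃ R, IsRouting A R Y T) →
      X.ncard < Y.ncard →
      ∃ y ∈ Y \ X, (insert y X ⊆ E ∧ ∃ R, IsRouting A R (insert y X) T)) := by
  refine ⟨⟨empty_subset E, ∅, by simp [IsRouting]⟩, ?_, ?_⟩
  · rintro X Y ⟨hYE, R, hR⟩ hXY
    exact ⟨hXY.trans hYE, R, hR.1, fun x hx => hR.2.1 x (hXY hx), hR.2.2⟩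
  · rintro X Y ⟨hXE, R, hR⟩ ⟨hYE, R', hR'⟩ hlt
    obtain ⟨y, hy, R'', hR''⟩ := hR.exists_insert hR' hlt
    exact ⟨y, hy, insert_subset (hYE hy.1) hXE, R'', hR''⟩
end

section
/- If M₁ is a minor of a matroid M₂ and M₂ is strongly base-orderable, then M₁ is strongly base-orderable (the class of strongly base-orderable matroids is closed under minors). -/
open Set

/-- `M` is strongly base-orderable. -/
def Matroid.StronglyBaseOrderable {α : Type*} (M : Matroid α) : Prop :=
  ∀ B₁ B₂ : Set α, M.IsBase B₁ → M.IsBase B₂ →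
    ∃ φ : α → α, Set.BijOn φ B₁ B₂ ∧ ∀ X ⊆ B₁, M.IsBase ((B₁ \ X) ∪ φ '' X)

/-- `N` is a minor of `M`: it arises by contracting an (independent) set `C` and deleting `D`. -/
def Matroid.IsMinorOf {α : Type*} (N M : Matroid α) : Prop :=
  ∃ C D : Set α, Disjoint C D ∧ C ∪ D ⊆ M.E ∧ M.Indep C ∧ N.E = M.E \ (C ∪ D) ∧
    ∀ X ⊆ N.E, (N.Indep X ↔ M.Indep (X ∪ C))

/-!
A minor of `M` is `(M ／ C) ↾ R` with `C` independent, so it suffices to handle contraction and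
restriction. In both cases there is a fixed set `P`, disjoint from the ground set of the minor,
such that the bases of the minor are exactly the sets `W` with `W ∪ P` a base of `M`: for
contraction `P = C`, for restriction `P = B \ R` where `B` is a base extending a basis of `R`.

Given bases `B₁, B₂` of the minor, `M` provides an exchange bijection
`φ : B₁ ∪ P → B₂ ∪ P`, and it remains to make it fix `P`. Send each `x ∈ B₁ \ B₂` to the point
where its `φ`-orbit first leaves `B₁ ∪ P`, and fix every other point. Exchanging a set `X` along
the whole orbit segments starting in `X` shows that this shortcut map still has the exchange
property. The exchange property of `φ` (and of its inverse) is also what forces every orbit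
segment to leave, forwards and backwards, so that the shortcut map is a bijection.
-/

lemma Set.biUnion_insert_eq {α ι : Type*} (s : Set ι) (u : ι → α) (S : ι → Set α) :
    ⋃ i ∈ s, insert (u i) (S i) = u '' s ∪ ⋃ i ∈ s, S i := by
  ext y
  simp only [mem_iUnion₂, mem_insert_iff, mem_union, mem_image, exists_prop]
  grind

lemma Set.BijOn.exists_invOn {α : Type*} {f : α → α} {s t : Set α} (h : BijOn f s t) :
    ∃ g, InvOn g f s t := by
  cases isEmpty_or_nonempty α
  · exact ⟨id, fun x ↦ isEmptyElim x, fun x ↦ isEmptyElim x⟩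
  · exact ⟨_, h.invOn_invFunOn⟩

lemma Set.BijOn.of_union_of_eqOn_id {α : Type*} {f : α → α} {s t u : Set α}
    (h : BijOn f (s ∪ u) (t ∪ u)) (hu : EqOn f id u) (hs : Disjoint s u) (ht : Disjoint t u) :
    BijOn f s t := by
  have hmaps : MapsTo f s t := fun x hx ↦ by
    obtain hxt | hxu := h.mapsTo (Or.inl hx)
    · exact hxt
    · have hfx : f x = x := h.injOn (Or.inr hxu) (Or.inl hx) (hu hxu)
      rw [hfx] at hxu
      exact (hs.notMem_of_mem_left hx hxu).elim
  refine ⟨hmaps, h.injOn.mono subset_union_left, fun y hy ↦ ?_⟩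
  obtain ⟨x, hx | hx, rfl⟩ := h.surjOn (Or.inl hy)
  · exact ⟨x, hx, rfl⟩
  · rw [hu hx] at hy
    exact (ht.notMem_of_mem_left hy hx).elim

namespace Function

variable {α : Type*} {f g : α → α} {s t : Set α} {x : α} {n : ℕ}

/-- This is `0` if the `f`-orbit of `x` never leaves `s`. -/
noncomputable def exitTime (f : α → α) (s : Set α) (x : α) : ℕ := sInf {n | f^[n] x ∉ s}

noncomputable def exitPoint (f : α → α) (s : Set α) (x : α) : α := f^[exitTime f s x] x

lemma iterate_exitTime_notMem (h : ∃ n, f^[n] x ∉ s) : f^[exitTime f s x] x ∉ s :=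
  Nat.sInf_mem h

lemma iterate_mem_of_lt_exitTime (h : n < exitTime f s x) : f^[n] x ∈ s :=
  not_not.1 (Nat.notMem_of_lt_sInf h)

lemma exitTime_eq (hn : f^[n] x ∉ s) (hlt : ∀ i < n, f^[i] x ∈ s) : exitTime f s x = n :=
  le_antisymm (Nat.sInf_le hn)
    (not_lt.1 fun h ↦ Nat.sInf_mem (s := {n | f^[n] x ∉ s}) ⟨n, hn⟩ (hlt _ h))

lemma exitTime_pos (hx : x ∈ s) (h : ∃ n, f^[n] x ∉ s) : 0 < exitTime f s x :=
  Nat.pos_of_ne_zero fun h0 ↦ iterate_exitTime_notMem h (h0 ▸ hx)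

lemma iterate_succ_mem_of_lt_exitTime (hf : MapsTo f s t) (h : n < exitTime f s x) :
    f^[n + 1] x ∈ t := by
  rw [iterate_succ_apply']
  exact hf (iterate_mem_of_lt_exitTime h)

lemma exitPoint_mem_sdiff (hf : MapsTo f s t) (hx : x ∈ s) (h : ∃ n, f^[n] x ∉ s) :
    exitPoint f s x ∈ t \ s := by
  obtain ⟨k, hk⟩ := Nat.exists_eq_succ_of_ne_zero (exitTime_pos hx h).ne'
  refine ⟨?_, iterate_exitTime_notMem h⟩
  rw [exitPoint, hk]
  exact iterate_succ_mem_of_lt_exitTime hf (hk ▸ k.lt_succ_self)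

/-- Running the orbit of `x` backwards with a left inverse `g` retraces it, and the backward orbit
leaves `t` exactly at `x`. -/
lemma exitPoint_exitPoint (hgf : LeftInvOn g f s) (hf : MapsTo f s t) (hx : x ∈ s \ t) :
    exitPoint g t (exitPoint f s x) = x := by
  set k := exitTime f s x
  have hback : ∀ i ≤ k, g^[i] (f^[k] x) = f^[k - i] x := by
    intro i
    induction i with
    | zero => simp
    | succ i ih =>
      intro hi
      have hki : k - i = (k - (i + 1)) + 1 := by omega
      rw [iterate_succ_apply', ih (by omega), hki, iterate_succ_apply',
        hgf (iterate_mem_of_lt_exitTime (by omega))]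
  have hk : exitTime g t (f^[k] x) = k := by
    refine exitTime_eq (by rw [hback k le_rfl, Nat.sub_self]; exact hx.2) fun i hi ↦ ?_
    rw [hback i hi.le, show k - i = (k - i - 1) + 1 by omega]
    exact iterate_succ_mem_of_lt_exitTime hf (by omega)
  rw [exitPoint, exitPoint, hk, hback k le_rfl, Nat.sub_self, iterate_zero_apply]

lemma insert_image_iterate_Iio (f : α → α) (x : α) (k : ℕ) :
    insert x (f '' ((f^[·] x) '' Iio k)) = insert (f^[k] x) ((f^[·] x) '' Iio k) := by
  ext y
  simp only [mem_insert_iff, mem_image, mem_Iio, exists_exists_and_eq_and, ← iterate_succ_apply' f]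
  constructor
  · rintro (rfl | ⟨i, hi, rfl⟩)
    · rcases k.eq_zero_or_pos with rfl | hk
      · exact Or.inl rfl
      · exact Or.inr ⟨0, hk, rfl⟩
    · rcases (Nat.succ_le_of_lt hi).lt_or_eq with hlt | heq
      · exact Or.inr ⟨i + 1, hlt, rfl⟩
      · exact Or.inl (by rw [← heq])
  · rintro (rfl | ⟨i, hi, rfl⟩)
    · rcases k with _ | k
      · exact Or.inl rfl
      · exact Or.inr ⟨k, k.lt_succ_self, rfl⟩
    · rcases i with _ | i
      · exact Or.inl rfl
      · exact Or.inr ⟨i, by omega, rfl⟩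

open Classical in
noncomputable def shortcut (f : α → α) (s t : Set α) (x : α) : α :=
  if x ∈ t then x else exitPoint f s x

lemma shortcut_of_mem (hx : x ∈ t) : shortcut f s t x = x := if_pos hx

lemma shortcut_of_notMem (hx : x ∉ t) : shortcut f s t x = exitPoint f s x := if_neg hx

lemma mapsTo_shortcut (hf : MapsTo f s t) (hexit : ∀ x ∈ s \ t, ∃ n, f^[n] x ∉ s) :
    MapsTo (shortcut f s t) s t := by
  intro x hx
  by_cases hxt : x ∈ t
  · rwa [shortcut_of_mem hxt]
  · rw [shortcut_of_notMem hxt]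
    exact (exitPoint_mem_sdiff hf hx (hexit x ⟨hx, hxt⟩)).1

lemma leftInvOn_shortcut (hgf : LeftInvOn g f s) (hf : MapsTo f s t)
    (hexit : ∀ x ∈ s \ t, ∃ n, f^[n] x ∉ s) : LeftInvOn (shortcut g t s) (shortcut f s t) s := by
  intro x hx
  by_cases hxt : x ∈ t
  · rw [shortcut_of_mem hxt, shortcut_of_mem hx]
  · rw [shortcut_of_notMem hxt,
      shortcut_of_notMem (exitPoint_mem_sdiff hf hx (hexit x ⟨hx, hxt⟩)).2,
      exitPoint_exitPoint hgf hf ⟨hx, hxt⟩]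

lemma bijOn_shortcut (hfg : InvOn g f s t) (hf : MapsTo f s t) (hg : MapsTo g t s)
    (hexit_f : ∀ x ∈ s \ t, ∃ n, f^[n] x ∉ s) (hexit_g : ∀ y ∈ t \ s, ∃ n, g^[n] y ∉ t) :
    BijOn (shortcut f s t) s t :=
  InvOn.bijOn ⟨leftInvOn_shortcut hfg.1 hf hexit_f, leftInvOn_shortcut hfg.2 hg hexit_g⟩
    (mapsTo_shortcut hf hexit_f) (mapsTo_shortcut hg hexit_g)

end Function

namespace Matroid

open Function

variable {α : Type*} {M N : Matroid α} {φ g : α → α} {A₁ A₂ B J P R C X : Set α} {x : α}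

def IsStrongExchangeBij (M : Matroid α) (φ : α → α) (B₁ B₂ : Set α) : Prop :=
  BijOn φ B₁ B₂ ∧ ∀ X ⊆ B₁, M.IsBase ((B₁ \ X) ∪ φ '' X)

namespace IsStrongExchangeBij

lemma isBase_left (h : M.IsStrongExchangeBij φ A₁ A₂) : M.IsBase A₁ := by
  simpa using h.2 ∅ (empty_subset _)

lemma symm (h : M.IsStrongExchangeBij φ A₁ A₂) (hg : InvOn g φ A₁ A₂) :
    M.IsStrongExchangeBij g A₂ A₁ := by
  refine ⟨hg.symm.bijOn (hg.1.mapsTo h.1.surjOn) h.1.mapsTo, fun Y hY ↦ ?_⟩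
  have hgY : g '' Y ⊆ A₁ := (image_mono hY).trans (hg.1.mapsTo h.1.surjOn).image_subset
  have hφ : φ '' (A₁ \ g '' Y) = A₂ \ Y := by
    rw [h.1.injOn.image_sdiff_subset hgY, h.1.image_eq, hg.2.image_image' hY]
  simpa [hφ, sdiff_sdiff_cancel_left hgY, union_comm] using h.2 (A₁ \ g '' Y) sdiff_subset

/-- An orbit entering at `x ∈ A₁ \ A₂` and staying in `A₁` forever would be a set `X` with
`φ '' X ⊆ X \ {x}`, and exchanging it would give a base strictly inside `A₁`. -/
lemma exists_iterate_notMem (h : M.IsStrongExchangeBij φ A₁ A₂) (hx : x ∈ A₁ \ A₂) :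
    ∃ n, φ^[n] x ∉ A₁ := by
  by_contra! horbit
  set X := range (φ^[·] x)
  have hXA : X ⊆ A₁ := range_subset_iff.2 horbit
  have hsub : (A₁ \ X) ∪ φ '' X ⊆ A₁ \ {x} := by
    rintro y (⟨hy, hyX⟩ | ⟨_, ⟨n, rfl⟩, rfl⟩)
    · exact ⟨hy, by rintro rfl; exact hyX ⟨0, rfl⟩⟩
    · rw [← iterate_succ_apply' φ n x]
      refine ⟨horbit _, fun hx' ↦ hx.2 ?_⟩
      rw [← mem_singleton_iff.1 hx', iterate_succ_apply']
      exact h.1.mapsTo (horbit n)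
  have heq := (h.2 X hXA).eq_of_subset_isBase h.isBase_left (hsub.trans sdiff_subset)
  exact (hsub (heq.symm ▸ hx.1)).2 rfl

lemma isBase_shortcut (h : M.IsStrongExchangeBij φ A₁ A₂) (hX : X ⊆ A₁) :
    M.IsBase ((A₁ \ X) ∪ shortcut φ A₁ A₂ '' X) := by
  have hexit : ∀ x ∈ X \ A₂, ∃ n, φ^[n] x ∉ A₁ := fun x hx ↦
    h.exists_iterate_notMem ⟨hX hx.1, hx.2⟩
  -- `φ` shifts each orbit segment in `T` by one step, so exchanging `T` along `φ` amounts to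
  -- exchanging `X` along the shortcut map.
  set T := ⋃ x ∈ X \ A₂, (φ^[·] x) '' Iio (exitTime φ A₁ x)
  have hTA : T ⊆ A₁ :=
    iUnion₂_subset fun x _ ↦ image_subset_iff.2 fun i hi ↦ iterate_mem_of_lt_exitTime hi
  have hXT : X \ A₂ ⊆ T := fun x hx ↦
    mem_biUnion hx ⟨0, exitTime_pos (hX hx.1) (hexit x hx), rfl⟩
  have hφT : φ '' T ⊆ A₂ := (image_mono hTA).trans h.1.mapsTo.image_subset
  have hexitPoint : exitPoint φ A₁ '' (X \ A₂) ⊆ A₂ \ A₁ :=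
    image_subset_iff.2 fun x hx ↦ exitPoint_mem_sdiff h.1.mapsTo (hX hx.1) (hexit x hx)
  have hshift : X \ A₂ ∪ φ '' T = exitPoint φ A₁ '' (X \ A₂) ∪ T :=
    calc X \ A₂ ∪ φ '' T
        = ⋃ x ∈ X \ A₂, insert x (φ '' ((φ^[·] x) '' Iio (exitTime φ A₁ x))) := by
          rw [biUnion_insert_eq, image_id', image_iUnion₂]
      _ = ⋃ x ∈ X \ A₂, insert (exitPoint φ A₁ x) ((φ^[·] x) '' Iio (exitTime φ A₁ x)) := by
          simp_rw [insert_image_iterate_Iio]; rfl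
      _ = exitPoint φ A₁ '' (X \ A₂) ∪ T := biUnion_insert_eq ..
  have himage : shortcut φ A₁ A₂ '' X = (X ∩ A₂) ∪ exitPoint φ A₁ '' (X \ A₂) := by
    ext y
    simp only [mem_image, mem_union, mem_inter_iff, mem_sdiff]
    constructor
    · rintro ⟨x, hx, rfl⟩
      by_cases hx2 : x ∈ A₂
      · exact Or.inl (by rw [shortcut_of_mem hx2]; exact ⟨hx, hx2⟩)
      · exact Or.inr ⟨x, ⟨hx, hx2⟩, (shortcut_of_notMem hx2).symm⟩
    · rintro (⟨hy, hy2⟩ | ⟨x, ⟨hx, hx2⟩, rfl⟩)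
      · exact ⟨y, hy, shortcut_of_mem hy2⟩
      · exact ⟨x, hx, shortcut_of_notMem hx2⟩
  convert h.2 T hTA using 1
  rw [himage]
  ext y
  have h1 := Set.ext_iff.1 hshift y
  have h2 := @hTA y
  have h3 := @hXT y
  have h4 := @hφT y
  have h5 := @hexitPoint y
  have h6 := @hX y
  simp only [mem_union, mem_sdiff, mem_inter_iff] at h1 h2 h3 h4 h5 h6 ⊢
  tauto

lemma shortcut (h : M.IsStrongExchangeBij φ A₁ A₂) :
    M.IsStrongExchangeBij (Function.shortcut φ A₁ A₂) A₁ A₂ := by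
  obtain ⟨g, hg⟩ := h.1.exists_invOn
  exact ⟨bijOn_shortcut hg h.1.mapsTo (hg.1.mapsTo h.1.surjOn)
    (fun _ ↦ h.exists_iterate_notMem) (fun _ ↦ (h.symm hg).exists_iterate_notMem),
    fun _ ↦ h.isBase_shortcut⟩

end IsStrongExchangeBij

lemma StronglyBaseOrderable.of_isBase_iff_isBase_union (hM : M.StronglyBaseOrderable)
    (hP : Disjoint N.E P) (hNM : ∀ W ⊆ N.E, N.IsBase W ↔ M.IsBase (W ∪ P)) :
    N.StronglyBaseOrderable := by
  intro B₁ B₂ hB₁ hB₂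
  have hd₁ : Disjoint B₁ P := hP.mono_left hB₁.subset_ground
  have hd₂ : Disjoint B₂ P := hP.mono_left hB₂.subset_ground
  obtain ⟨φ, hφ⟩ := hM _ _ ((hNM B₁ hB₁.subset_ground).1 hB₁) ((hNM B₂ hB₂.subset_ground).1 hB₂)
  have hψ := IsStrongExchangeBij.shortcut hφ
  have hfix : EqOn (Function.shortcut φ (B₁ ∪ P) (B₂ ∪ P)) id P :=
    fun p hp ↦ Function.shortcut_of_mem (Or.inr hp)
  have hbij := hψ.1.of_union_of_eqOn_id hfix hd₁ hd₂
  refine ⟨_, hbij, fun X hX ↦ (hNM _ ?_).2 ?_⟩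
  · exact union_subset (sdiff_subset.trans hB₁.subset_ground)
      ((image_mono hX).trans (hbij.image_eq.subset.trans hB₂.subset_ground))
  · convert hψ.2 X (hX.trans subset_union_left) using 1
    rw [union_sdiff_distrib, (hd₁.mono_left hX).symm.sdiff_eq_left]
    ac_rfl

lemma StronglyBaseOrderable.contract (hM : M.StronglyBaseOrderable) (hC : M.Indep C) :
    (M ／ C).StronglyBaseOrderable :=
  hM.of_isBase_iff_isBase_union (P := C) disjoint_sdiff_left fun W hW ↦ by
    rw [hC.contract_isBase_iff, and_iff_left (disjoint_sdiff_left.mono_left hW)]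

lemma IsBase.isBasis_iff_isBase_union_sdiff (hB : M.IsBase B) (hBR : M.IsBasis (B ∩ R) R)
    (hJR : J ⊆ R) : M.IsBasis J R ↔ M.IsBase (J ∪ (B \ R)) := by
  have hunion : ∀ {J}, M.IsBasis J R → M.IsBase (J ∪ (B \ R)) := fun {J} hJ ↦ by
    have hindep : M.Indep ((B \ R) ∪ J) := by
      refine (hJ.contract_indep_iff.1 (hBR.contract_indep_iff.2 ⟨?_, disjoint_sdiff_right⟩)).1
      rw [sdiff_union_inter]
      exact hB.indep
    have hclosure : M.closure (J ∪ (B \ R)) = M.E := by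
      rw [← closure_union_closure_left_eq, hJ.closure_eq_closure, ← hBR.closure_eq_closure,
        closure_union_closure_left_eq, inter_union_sdiff, hB.closure_eq]
    exact (union_comm J _ ▸ hindep).isBase_of_ground_subset_closure hclosure.symm.subset
  refine ⟨hunion, fun hJB ↦ ?_⟩
  obtain ⟨J', hJ', hJJ'⟩ :=
    (hJB.indep.subset subset_union_left).subset_isBasis_of_subset hJR hBR.subset_ground
  have heq := hJB.eq_of_subset_isBase (hunion hJ') (union_subset_union_left _ hJJ')
  suffices J' ⊆ J from (hJJ'.antisymm this) ▸ hJ'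
  intro x hx
  obtain hxJ | hxBR := heq.symm.subset (Or.inl hx : x ∈ J' ∪ (B \ R))
  · exact hxJ
  · exact (hxBR.2 (hJ'.subset hx)).elim

lemma StronglyBaseOrderable.restrict (hM : M.StronglyBaseOrderable) (hR : R ⊆ M.E) :
    (M ↾ R).StronglyBaseOrderable := by
  obtain ⟨I, hI⟩ := M.exists_isBasis R
  obtain ⟨B, hB, rfl⟩ := hI.exists_isBase
  refine hM.of_isBase_iff_isBase_union (P := B \ R) disjoint_sdiff_right fun W hW ↦ ?_
  rw [isBase_restrict_iff, hB.isBasis_iff_isBase_union_sdiff hI hW]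

lemma IsMinorOf.eq_contract_restrict (h : N.IsMinorOf M) :
    ∃ C, M.Indep C ∧ N.E ⊆ (M ／ C).E ∧ N = (M ／ C) ↾ N.E := by
  obtain ⟨C, D, -, -, hC, hE, hindep⟩ := h
  have hEC : N.E ⊆ M.E \ C := hE ▸ sdiff_subset_sdiff_right subset_union_left
  refine ⟨C, hC, hEC, ext_indep rfl fun I hI ↦ ?_⟩
  rw [restrict_indep_iff, hC.contract_indep_iff, hindep I hI,
    and_iff_right (disjoint_sdiff_left.mono_left (hI.trans hEC)), and_iff_left hI]

end Matroid

/-- The class of strongly base-orderable matroids is closed under minors. -/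
theorem stronglyBaseOrderable_of_minor {α : Type*} (M₁ M₂ : Matroid α)
    (h : M₁.IsMinorOf M₂) (hM₂ : M₂.StronglyBaseOrderable) :
    M₁.StronglyBaseOrderable := by
  obtain ⟨C, hC, hE, hM₁⟩ := h.eq_contract_restrict
  rw [hM₁]
  exact (hM₂.contract hC).restrict hE
end

section
/- If M is a restriction of N to X ⊆ E such that N arises from M by adding a single element e in general position on a flat F₁ of M (i.e., the modular cut of flats of M whose closure in N contains e has unique minimal element F₁), and M is a gammoid, then N is a gammoid: given a representation (D, T, X) of M with e ∉ V(D), the triple (D', T, X ∪ {e}) with D' obtained from D by adding vertex e and arcs from e to every element of F₁ represents N. -/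
open Set Matroid

/-- `(D,T)` with vertex set `V` (inside the ambient type) represents the matroid `M`. -/
def RepresentsOn {α : Type*} (A : α → α → Prop) (V T : Set α) (M : Matroid α) : Prop :=
  M.E ⊆ V ∧ T ⊆ V ∧ (∀ x y, A x y → x ∈ V ∧ y ∈ V) ∧
  ∀ X : Set α, M.Indep X ↔ X ⊆ M.E ∧ ∃ R, IsRouting A R X T

/-! The new vertex `e` has no incoming arcs. Hence a routing from a set `Y ∌ e` never meets `e`
and is a routing of the old digraph, while a routing from `insert e Y` consists of a routing
from `Y` in the old digraph together with a disjoint path `e, f, …` with `f ∈ F₁`; cutting off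
`e` (or prepending it) identifies linkings of `insert e Y` with linkings of `insert f Y` for
some `f ∈ F₁ \ Y`. On the matroid side, since the modular cut is generated by `F₁`, the element
`e` lies in the closure of `Y ⊆ X` exactly when `F₁ ⊆ cl_M(Y)`, so `insert e Y` is independent
in `N` iff `insert f Y` is independent in `M` for some `f ∈ F₁ \ Y`. -/

namespace Matroid

variable {α : Type*} {N : Matroid α} {X F Y : Set α} {e : α}

/-- The hypothesis `hcut` says that the modular cut of the extension `N` of `N ↾ X` by `e`
is the principal cut generated by `F`. -/
lemma mem_closure_iff_subset_restrict_closure (hXN : X ⊆ N.E)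
    (hcut : ∀ G, (N ↾ X).IsFlat G → (e ∈ N.closure G ↔ F ⊆ G)) (hYX : Y ⊆ X) :
    e ∈ N.closure Y ↔ F ⊆ (N ↾ X).closure Y := by
  have hcl : N.closure (N.closure Y ∩ X) = N.closure Y :=
    (closure_subset_closure_of_subset_closure inter_subset_left).antisymm
      (N.closure_subset_closure (subset_inter (N.subset_closure Y (hYX.trans hXN)) hYX))
  rw [← hcut _ (isFlat_closure Y), restrict_closure_eq N hYX hXN, hcl]

lemma insert_indep_iff_exists_restrict_insert_indep (hXN : X ⊆ N.E) (he : e ∈ N.E)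
    (hFX : F ⊆ X) (hcut : ∀ G, (N ↾ X).IsFlat G → (e ∈ N.closure G ↔ F ⊆ G))
    (hYX : Y ⊆ X) (heY : e ∉ Y) :
    N.Indep (insert e Y) ↔ ∃ f ∈ F \ Y, (N ↾ X).Indep (insert f Y) := by
  by_cases hY : N.Indep Y
  · have hYX' : (N ↾ X).Indep Y := restrict_indep_iff.2 ⟨hY, hYX⟩
    rw [hY.insert_indep_iff_of_notMem heY, mem_sdiff, and_iff_right he,
      mem_closure_iff_subset_restrict_closure hXN hcut hYX, not_subset]
    refine ⟨fun ⟨f, hfF, hfcl⟩ => ?_, fun ⟨f, ⟨hfF, hfY⟩, hf⟩ =>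
      ⟨f, hfF, (hYX'.notMem_closure_iff_of_notMem hfY (hFX hfF)).2 hf⟩⟩
    have hfY : f ∉ Y := fun hfY => hfcl (mem_closure_of_mem' _ hfY (hFX hfF))
    exact ⟨f, ⟨hfF, hfY⟩, (hYX'.notMem_closure_iff_of_notMem hfY (hFX hfF)).1 hfcl⟩
  · refine iff_of_false (fun h => hY (h.subset (subset_insert e Y))) ?_
    rintro ⟨f, -, hf⟩
    exact hY (restrict_indep_iff.1 (hf.subset (subset_insert f Y))).1

end Matroid

section Routing

variable {α : Type*} {A B : α → α → Prop} {R : Set (List α)} {Y Z T V : Set α}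
  {F : Set α} {p q : List α} {x s : α}

def addSource (A : α → α → Prop) (s : α) (F : Set α) (x y : α) : Prop :=
  A x y ∨ x = s ∧ y ∈ F

def IsLinked (A : α → α → Prop) (Z T : Set α) : Prop :=
  ∃ R, IsRouting A R Z T

def pathsFrom (R : Set (List α)) (Z : Set α) : Set (List α) :=
  {p ∈ R | ∃ z ∈ Z, p.head? = some z}

lemma notMem_of_isChain_of_head?_ne (hs : ∀ y, ¬ A y s) (hp : p.IsChain A)
    (hx : p.head? = some x) (hxs : x ≠ s) : s ∉ p := by
  obtain ⟨l, rfl⟩ := List.head?_eq_some_iff.1 hx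
  have hl := List.IsChain.cons_induction (· ≠ s) l hp (fun u _ huv _ hv => hs u (hv ▸ huv)) hxs
  rintro (_ | ⟨_, hsl⟩)
  · exact hxs rfl
  · exact hl s hsl rfl

lemma mem_of_isChain_of_getLast? (hAV : ∀ x y, A x y → x ∈ V ∧ y ∈ V) (hp : p.IsChain A)
    {t : α} (ht : p.getLast? = some t) (htV : t ∈ V) : ∀ v ∈ p, v ∈ V :=
  List.IsChain.backwards_induction (· ∈ V) p hp (fun x y hxy _ => (hAV x y hxy).1)
    fun hne => Option.some_injective _ ((List.getLast?_eq_some_getLast hne).symm.trans ht) ▸ htV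

namespace IsRouting

lemma mono (h : IsRouting A R Z T) (hAB : ∀ x y, A x y → B x y) : IsRouting B R Z T :=
  ⟨fun p hp => ⟨(h.1 p hp).1, (h.1 p hp).2.1, (h.1 p hp).2.2.imp hAB⟩, h.2⟩

lemma mem_of_mem (h : IsRouting A R Z T) (hAV : ∀ x y, A x y → x ∈ V ∧ y ∈ V) (hTV : T ⊆ V)
    (hp : p ∈ R) : ∀ v ∈ p, v ∈ V := by
  obtain ⟨t, htT, ht⟩ := h.2.2.1 p hp
  exact mem_of_isChain_of_getLast? hAV (h.1 p hp).2.2 ht (hTV htT)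

lemma restrict (h : IsRouting A R Y T) (hZY : Z ⊆ Y) : IsRouting A (pathsFrom R Z) Z T := by
  refine ⟨fun p hp => h.1 p hp.1, fun z hz => ?_, fun p hp => h.2.2.1 p hp.1,
    fun p hp q hq => h.2.2.2 p hp.1 q hq.1⟩
  obtain ⟨p, hpR, hpz⟩ := h.2.1 z (hZY hz)
  exact ⟨p, ⟨hpR, z, hz, hpz⟩, hpz⟩

lemma insert (h : IsRouting A R Z T) (hp : IsDiPath A p) (hx : p.head? = some x)
    (hT : ∃ t ∈ T, p.getLast? = some t) (hdisj : ∀ q ∈ R, ∀ v ∈ p, v ∉ q) :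
    IsRouting A (insert p R) (insert x Z) T := by
  refine ⟨?_, ?_, ?_, ?_⟩
  · rintro q (rfl | hq)
    exacts [hp, h.1 q hq]
  · rintro z (rfl | hz)
    · exact ⟨p, mem_insert p R, hx⟩
    · obtain ⟨q, hq, hqz⟩ := h.2.1 z hz
      exact ⟨q, mem_insert_of_mem p hq, hqz⟩
  · rintro q (rfl | hq)
    exacts [hT, h.2.2.1 q hq]
  · rintro q₁ (rfl | hq₁) q₂ (rfl | hq₂) hne v hv₁ hv₂
    · exact hne rfl
    · exact hdisj q₂ hq₂ v hv₁ hv₂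
    · exact hdisj q₁ hq₁ v hv₂ hv₁
    · exact h.2.2.2 q₁ hq₁ q₂ hq₂ hne v hv₁ hv₂

end IsRouting

lemma ne_of_mem_pathsFrom (hq : q ∈ pathsFrom R Z) (hx : p.head? = some x) (hxZ : x ∉ Z) :
    q ≠ p := by
  rintro rfl
  obtain ⟨-, z, hz, hqz⟩ := hq
  exact hxZ (Option.some_injective _ (hx.symm.trans hqz) ▸ hz)

lemma IsDiPath.of_addSource (hp : IsDiPath (addSource A s F) p) (hsp : s ∉ p) :
    IsDiPath A p :=
  ⟨hp.1, hp.2.1, List.IsChain.imp_of_mem_imp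
    (fun _ _ hu _ huv => huv.resolve_right fun h => hsp (h.1 ▸ hu)) hp.2.2⟩

lemma not_addSource_source (hAV : ∀ x y, A x y → x ∈ V ∧ y ∈ V) (hsV : s ∉ V) (hsF : s ∉ F)
    (y : α) : ¬ addSource A s F y s :=
  fun h => h.elim (fun h => hsV (hAV y s h).2) fun h => hsF h.2

lemma IsRouting.of_addSource (hAV : ∀ x y, A x y → x ∈ V ∧ y ∈ V) (hsV : s ∉ V) (hsF : s ∉ F)
    (h : IsRouting (addSource A s F) R Y T) (hZY : Z ⊆ Y) (hsZ : s ∉ Z) :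
    IsRouting A (pathsFrom R Z) Z T := by
  have h' := h.restrict hZY
  refine ⟨fun p hp => (h'.1 p hp).of_addSource ?_, h'.2⟩
  have hchain := (h'.1 p hp).2.2
  obtain ⟨-, z, hz, hpz⟩ := hp
  exact notMem_of_isChain_of_head?_ne (not_addSource_source hAV hsV hsF) hchain hpz
    (ne_of_mem_of_not_mem hz hsZ)

lemma isLinked_addSource_iff (hAV : ∀ x y, A x y → x ∈ V ∧ y ∈ V) (hsV : s ∉ V) (hsF : s ∉ F)
    (hsZ : s ∉ Z) : IsLinked (addSource A s F) Z T ↔ IsLinked A Z T :=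
  ⟨fun ⟨_, hR⟩ => ⟨_, IsRouting.of_addSource hAV hsV hsF hR subset_rfl hsZ⟩,
    fun ⟨R, hR⟩ => ⟨R, hR.mono fun _ _ => Or.inl⟩⟩

lemma IsLinked.exists_of_addSource_insert (hAV : ∀ x y, A x y → x ∈ V ∧ y ∈ V) (hTV : T ⊆ V)
    (hsV : s ∉ V) (hsF : s ∉ F) (hsZ : s ∉ Z) (h : IsLinked (addSource A s F) (insert s Z) T) :
    ∃ f ∈ F \ Z, IsLinked A (insert f Z) T := by
  obtain ⟨R, hR⟩ := h
  obtain ⟨p, hpR, hps⟩ := hR.2.1 s (mem_insert s Z)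
  obtain ⟨t, htT, hpt⟩ := hR.2.2.1 p hpR
  have hp := hR.1 p hpR
  obtain ⟨l, rfl⟩ := List.head?_eq_some_iff.1 hps
  obtain ⟨f, l, rfl⟩ : ∃ f l', l = f :: l' := by
    cases l with
    | nil =>
      rw [List.getLast?_singleton, Option.some_inj] at hpt
      exact absurd (hpt ▸ hTV htT) hsV
    | cons f l' => exact ⟨f, l', rfl⟩
  have hfF : f ∈ F :=
    ((List.isChain_cons_cons.1 hp.2.2).1.resolve_left fun h => hsV (hAV s f h).1).2
  have hfp : IsDiPath A (f :: l) :=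
    IsDiPath.of_addSource ⟨List.cons_ne_nil f l, hp.2.1.of_cons, hp.2.2.tail⟩
      (List.nodup_cons.1 hp.2.1).1
  have hR' := IsRouting.of_addSource hAV hsV hsF hR (subset_insert s Z) hsZ
  have hdisj : ∀ q ∈ pathsFrom R Z, ∀ v ∈ f :: l, v ∉ q := fun q hq v hv =>
    hR.2.2.2 _ hpR q hq.1 (ne_of_mem_pathsFrom hq hps hsZ).symm v (List.mem_cons_of_mem s hv)
  refine ⟨f, ⟨hfF, fun hfZ => ?_⟩, _,
    hR'.insert hfp rfl ⟨t, htT, by rwa [List.getLast?_cons_cons] at hpt⟩ hdisj⟩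
  obtain ⟨q, hq, hqf⟩ := hR'.2.1 f hfZ
  exact hdisj q hq f List.mem_cons_self (List.mem_of_mem_head? hqf)

lemma IsLinked.addSource_insert (hAV : ∀ x y, A x y → x ∈ V ∧ y ∈ V) (hTV : T ⊆ V)
    (hsV : s ∉ V) {f : α} (hf : f ∈ F \ Z) (h : IsLinked A (insert f Z) T) :
    IsLinked (addSource A s F) (insert s Z) T := by
  obtain ⟨R, hR⟩ := h
  obtain ⟨p, hpR, hpf⟩ := hR.2.1 f (mem_insert f Z)
  obtain ⟨t, htT, hpt⟩ := hR.2.2.1 p hpR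
  have hpV := hR.mem_of_mem hAV hTV hpR
  have hp := hR.1 p hpR
  obtain ⟨l, rfl⟩ := List.head?_eq_some_iff.1 hpf
  have hsp : IsDiPath (addSource A s F) (s :: f :: l) :=
    ⟨List.cons_ne_nil _ _, List.nodup_cons.2 ⟨fun hs => hsV (hpV s hs), hp.2.1⟩,
      List.isChain_cons_cons.2 ⟨Or.inr ⟨rfl, hf.1⟩, hp.2.2.imp fun _ _ => Or.inl⟩⟩
  refine ⟨_, ((hR.restrict (subset_insert f Z)).mono fun _ _ => Or.inl).insert hsp rfl
    ⟨t, htT, by rwa [List.getLast?_cons_cons]⟩ ?_⟩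
  rintro q hq v (_ | ⟨_, hv⟩) hvq
  · exact hsV (hR.mem_of_mem hAV hTV hq.1 s hvq)
  · exact hR.2.2.2 _ hpR q hq.1 (ne_of_mem_pathsFrom hq hpf hf.2).symm v hv hvq

lemma isLinked_addSource_insert_iff (hAV : ∀ x y, A x y → x ∈ V ∧ y ∈ V) (hTV : T ⊆ V)
    (hsV : s ∉ V) (hsF : s ∉ F) (hsZ : s ∉ Z) :
    IsLinked (addSource A s F) (insert s Z) T ↔ ∃ f ∈ F \ Z, IsLinked A (insert f Z) T :=
  ⟨IsLinked.exists_of_addSource_insert hAV hTV hsV hsF hsZ,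
    fun ⟨_, hf, h⟩ => h.addSource_insert hAV hTV hsV hf⟩

end Routing

/-- If `N` arises from the gammoid `M = N ↾ X` by adding a single element `e` in general
position on a flat `F₁` of `M`, then adding the vertex `e` with arcs from `e` to every element
of `F₁` to a representation of `M` (not using `e`) yields a representation of `N`;
in particular `N` is again a gammoid. -/
theorem extension_general_position_gammoid {α : Type*} (M N : Matroid α) (X : Set α) (e : α)
    (F₁ : Set α) (A : α → α → Prop) (V T : Set α)
    (hM : M = N ↾ X) (hNE : N.E = insert e X) (heX : e ∉ X)
    (hF₁ : M.IsFlat F₁)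
    (hcut : ∀ F : Set α, M.IsFlat F → (e ∈ N.closure F ↔ F₁ ⊆ F))
    (hrep : RepresentsOn A V T M) (heV : e ∉ V) :
    RepresentsOn (fun x y => A x y ∨ (x = e ∧ y ∈ F₁)) (insert e V) T N := by
  subst hM
  obtain ⟨hXV, hTV, hAV, hrep⟩ := hrep
  have hF₁X : F₁ ⊆ X := hF₁.subset_ground
  have heF₁ : e ∉ F₁ := fun h => heX (hF₁X h)
  have hXN : X ⊆ N.E := hNE ▸ subset_insert e X
  have hlink : ∀ Z ⊆ X, (N ↾ X).Indep Z ↔ IsLinked A Z T := fun Z hZX =>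
    (hrep Z).trans (and_iff_right hZX)
  refine ⟨hNE ▸ insert_subset_insert hXV, hTV.trans (subset_insert e V), ?_, fun Y => ?_⟩
  · rintro x y (h | ⟨rfl, hy⟩)
    · exact ⟨mem_insert_of_mem e (hAV x y h).1, mem_insert_of_mem e (hAV x y h).2⟩
    · exact ⟨mem_insert x V, mem_insert_of_mem x (hXV (hF₁X hy))⟩
  refine (and_iff_right_of_imp Indep.subset_ground).symm.trans (and_congr_right fun hYN => ?_)
  change N.Indep Y ↔ IsLinked (addSource A e F₁) Y T
  rcases subset_insert_iff.1 (hNE ▸ hYN) with hYX | ⟨heY, hYX⟩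
  · rw [isLinked_addSource_iff hAV heV heF₁ fun h => heX (hYX h), ← hlink Y hYX,
      restrict_indep_iff, and_iff_left hYX]
  · have heY' : e ∉ Y \ {e} := fun h => h.2 rfl
    rw [← insert_sdiff_self_of_mem heY, insert_indep_iff_exists_restrict_insert_indep hXN
      (hNE ▸ mem_insert e X) hF₁X hcut hYX heY',
      isLinked_addSource_insert_iff hAV hTV heV heF₁ heY']
    exact exists_congr fun f => and_congr_right fun hf => hlink _ (insert_subset (hF₁X hf.1) hYX)
end
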